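/- Let E be a nonempty compact subset of ℝ (with the standard metric), t > 0, and λ ∈ [0,1]. Then D^t(λ·E) ≥ λ·D^t(E) + (1 − λ), where λ·E = { λx : x ∈ E }. -/

import Mathlib

open scoped Pointwise


lemma exp_combo (l u : ℝ) (h0 : 0 ≤ l) (h1 : l ≤ 1) :
    Real.exp (-u) ≤ l * Real.exp (-(l*u)) + (1-l) * Real.exp (-((1+l)*u)) := by
  have := convexOn_exp.2 (Set.mem_univ (-(l*u))) (Set.mem_univ (-((1+l)*u))) h0
    (by linarith : (0:ℝ) ≤ 1 - l) (by ring)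
  simp only [smul_eq_mul] at this
  calc Real.exp (-u) = Real.exp (l * -(l*u) + (1-l) * -((1+l)*u)) := by ring_nf
    _ ≤ _ := this

lemma G_nonneg (l : ℝ) (h0 : 0 ≤ l) (h1 : l ≤ 1) (u : ℝ) (hu : 0 ≤ u) :
    0 ≤ (1-l) + (1+l)*Real.exp (-u) - (1+l)*Real.exp (-(l*u)) - (1-l)*Real.exp (-((1+l)*u)) := by
  set G : ℝ → ℝ := fun u => (1-l) + (1+l)*Real.exp (-u) - (1+l)*Real.exp (-(l*u))
    - (1-l)*Real.exp (-((1+l)*u)) with hG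
  have hd : ∀ x : ℝ, HasDerivAt G ((1+l) * (-(Real.exp (-x)) + l * Real.exp (-(l*x))
      + (1-l) * Real.exp (-((1+l)*x)))) x := by
    intro x
    have h1' : HasDerivAt (fun u : ℝ => Real.exp (-u)) (Real.exp (-x) * (-1)) x :=
      ((hasDerivAt_id x).neg).exp
    have h2' : HasDerivAt (fun u : ℝ => Real.exp (-(l*u))) (Real.exp (-(l*x)) * (-(l*1))) x :=
      (((hasDerivAt_id x).const_mul l).neg).exp
    have h3' : HasDerivAt (fun u : ℝ => Real.exp (-((1+l)*u))) (Real.exp (-((1+l)*x)) * (-((1+l)*1))) x :=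
      (((hasDerivAt_id x).const_mul (1+l)).neg).exp
    have := (((h1'.const_mul (1+l)).const_add (1-l)).sub (h2'.const_mul (1+l))).sub
      (h3'.const_mul (1-l))
    exact this.congr_deriv (by ring)
  have hmono : Monotone G := by
    apply monotone_of_deriv_nonneg
    · intro x; exact (hd x).differentiableAt
    · intro x
      rw [(hd x).deriv]
      have := exp_combo l x h0 h1
      nlinarith [this, Real.exp_pos (-x)]
  have h0' : G 0 = 0 := by simp [hG]
  have := hmono hu
  rw [h0'] at this
  exact this

lemma tanh_scale (l s : ℝ) (h0 : 0 ≤ l) (h1 : l ≤ 1) (hs : 0 ≤ s) :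
    l * ((1 - Real.exp (-s))/(1 + Real.exp (-s)))
      ≤ (1 - Real.exp (-(l*s)))/(1 + Real.exp (-(l*s))) := by
  have e1 : (0:ℝ) < 1 + Real.exp (-s) := by positivity
  have e2 : (0:ℝ) < 1 + Real.exp (-(l*s)) := by positivity
  rw [show l * ((1 - Real.exp (-s)) / (1 + Real.exp (-s)))
      = l * (1 - Real.exp (-s)) / (1 + Real.exp (-s)) from (mul_div_assoc _ _ _).symm,
    div_le_div_iff₀ e1 e2]
  have hmul : Real.exp (-((1+l)*s)) = Real.exp (-s) * Real.exp (-(l*s)) := by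
    rw [← Real.exp_add]; ring_nf
  have := G_nonneg l h0 h1 s hs
  rw [hmul] at this
  nlinarith [this]

noncomputable def Kf (t x y : ℝ) : ℝ := Real.exp (-(t * dist x y))

lemma Kf_pos (t x y : ℝ) : 0 < Kf t x y := Real.exp_pos _
lemma Kf_self (t x : ℝ) : Kf t x x = 1 := by simp [Kf]
lemma Kf_comm (t x y : ℝ) : Kf t x y = Kf t y x := by rw [Kf, Kf, dist_comm]
lemma Kf_le_one {t : ℝ} (ht : 0 ≤ t) (x y : ℝ) : Kf t x y ≤ 1 := by
  rw [Kf, show (1:ℝ) = Real.exp 0 from (Real.exp_zero).symm]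
  apply Real.exp_le_exp.2
  have : 0 ≤ t * dist x y := mul_nonneg ht dist_nonneg
  linarith
lemma Kf_mul {t x y z : ℝ} (hxy : x ≤ y) (hyz : y ≤ z) :
    Kf t x z = Kf t x y * Kf t y z := by
  rw [Kf, Kf, Kf, ← Real.exp_add, Real.dist_eq, Real.dist_eq, Real.dist_eq,
    abs_of_nonpos (by linarith : x - z ≤ 0), abs_of_nonpos (by linarith : x - y ≤ 0),
    abs_of_nonpos (by linarith : y - z ≤ 0)]
  ring_nf

noncomputable def wfun (t : ℝ) : List ℝ → ℝ → ℝ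
  | [] => fun _ => 0
  | [x] => fun z => if z = x then 1 else 0
  | x :: y :: ys => fun z =>
      (if z = x then 1/(1 + Kf t x y) else 0) +
      (if z = y then 1/(1 + Kf t x y) - 1 else 0) + wfun t (y :: ys) z

lemma wfun_support (t : ℝ) : ∀ (xs : List ℝ) (z : ℝ), wfun t xs z ≠ 0 → z ∈ xs := by
  intro xs
  induction xs with
  | nil => intro z h; simp [wfun] at h
  | cons x xs ih =>
    intro z h
    match xs, h with
    | [], h => simp [wfun] at h ⊢; by_contra hz; simp [hz] at h
    | y :: ys, h =>
      simp only [wfun] at h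
      by_cases h1 : z = x
      · simp [h1]
      by_cases h2 : z ∈ y :: ys
      · simp [h2]
      · exfalso
        have h3 : wfun t (y :: ys) z = 0 := by
          by_contra hc; exact h2 (ih z hc)
        have h4 : z ≠ y := by intro hzy; exact h2 (by simp [hzy])
        simp [h1, h4, h3] at h

lemma wfun_notmem {t : ℝ} {xs : List ℝ} {z : ℝ} (h : z ∉ xs) : wfun t xs z = 0 := by
  by_contra hc; exact h (wfun_support t _ _ hc)

lemma one_add_Kf_pos (t x y : ℝ) : (0:ℝ) < 1 + Kf t x y := by
  have := Kf_pos t x y; linarith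

lemma half_le_inv_one_add_Kf {t : ℝ} (ht : 0 ≤ t) (x y : ℝ) :
    1/2 ≤ 1/(1 + Kf t x y) := by
  have hK := Kf_le_one ht x y
  have hKp := Kf_pos t x y
  rw [div_le_div_iff₀ (by norm_num) (one_add_Kf_pos t x y)]
  linarith

lemma inv_one_add_Kf_le_one {t x y : ℝ} : 1/(1 + Kf t x y) ≤ 1 := by
  have hKp := Kf_pos t x y
  rw [div_le_one (one_add_Kf_pos t x y)]
  linarith

lemma wfun_head {t : ℝ} (ht : 0 ≤ t) (x : ℝ) (xs : List ℝ) (hn : (x :: xs).Nodup) :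
    1/2 ≤ wfun t (x :: xs) x := by
  match xs with
  | [] => simp [wfun]; norm_num
  | y :: ys =>
    have hx : x ∉ y :: ys := (List.nodup_cons.mp hn).1
    have h0 : wfun t (y :: ys) x = wfun (t := t) (y :: ys) x := rfl
    have h0' : wfun t (y :: ys) x = 0 := wfun_notmem hx
    have hxy : x ≠ y := fun h => hx (by simp [h])
    show 1/2 ≤ (if x = x then 1/(1 + Kf t x y) else 0) +
      (if x = y then 1/(1 + Kf t x y) - 1 else 0) + wfun t (y :: ys) x
    rw [if_pos rfl, if_neg hxy, h0', add_zero, add_zero]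
    exact half_le_inv_one_add_Kf ht x y

lemma wfun_nonneg {t : ℝ} (ht : 0 ≤ t) : ∀ (xs : List ℝ), xs.Nodup → ∀ z, 0 ≤ wfun t xs z := by
  intro xs
  induction xs with
  | nil => intro _ z; simp [wfun]
  | cons x xs ih =>
    intro hn z
    match xs with
    | [] =>
      show (0:ℝ) ≤ if z = x then 1 else 0
      split <;> norm_num
    | y :: ys =>
      have hn' : (y :: ys).Nodup := hn.of_cons
      have hhalf := half_le_inv_one_add_Kf ht x y
      show (0:ℝ) ≤ (if z = x then 1/(1 + Kf t x y) else 0) +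
        (if z = y then 1/(1 + Kf t x y) - 1 else 0) + wfun t (y :: ys) z
      by_cases hzy : z = y
      · have hzx : z ≠ x := by
          intro h; rw [← h] at hn; rw [hzy] at hn; simp at hn
        have hh := wfun_head ht y ys hn'
        rw [if_neg hzx, if_pos hzy, hzy]
        linarith [inv_one_add_Kf_le_one (t := t) (x := x) (y := y)]
      · have h3 := ih hn' z
        by_cases hzx : z = x
        · rw [if_pos hzx, if_neg hzy]
          have := half_le_inv_one_add_Kf ht x y
          linarith
        · rw [if_neg hzx, if_neg hzy]; linarith

lemma wfun_cons_eq {t x y : ℝ} {ys : List ℝ} {z : ℝ} :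
    wfun t (x :: y :: ys) z = (if z = x then 1/(1 + Kf t x y) else 0) +
      (if z = y then 1/(1 + Kf t x y) - 1 else 0) + wfun t (y :: ys) z := rfl

lemma wfun_identity {t : ℝ} (ht : 0 ≤ t) : ∀ (xs : List ℝ), xs.Pairwise (· ≤ ·) → xs.Nodup →
    ∀ a ∈ xs, ∑ z ∈ xs.toFinset, Kf t a z * wfun t xs z = 1 := by
  intro xs
  induction xs with
  | nil => intro _ _ a ha; simp at ha
  | cons x xs ih =>
    intro hs hn a ha
    match xs with
    | [] =>
      have hax : a = x := by simpa using ha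
      subst hax
      simp [wfun, Kf_self]
    | y :: ys =>
      have hxmem : x ∉ y :: ys := (List.nodup_cons.mp hn).1
      have hn' : (y :: ys).Nodup := hn.of_cons
      have hs' : (y :: ys).Pairwise (· ≤ ·) := (List.pairwise_cons.mp hs).2
      have hxle : ∀ z ∈ y :: ys, x ≤ z := (List.pairwise_cons.mp hs).1
      have hyle : ∀ z ∈ y :: ys, y ≤ z := by
        intro z hz
        rcases List.mem_cons.mp hz with h | h
        · exact le_of_eq h.symm
        · exact (List.pairwise_cons.mp hs').1 z h
      have hxy : x ≤ y := hxle y (by simp)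
      set e := Kf t x y with he
      have hep := Kf_pos t x y
      have he1 : (0:ℝ) < 1 + e := by linarith
      have hxT : x ∉ (y :: ys).toFinset := by
        rw [List.mem_toFinset]; exact hxmem
      have hwx : wfun t (y :: ys) x = 0 := wfun_notmem hxmem
      -- key sum decomposition
      have hsum : ∀ b : ℝ, ∑ z ∈ (x :: y :: ys).toFinset, Kf t b z * wfun t (x :: y :: ys) z
          = Kf t b x * (1/(1+e)) + Kf t b y * (1/(1+e) - 1)
            + ∑ z ∈ (y :: ys).toFinset, Kf t b z * wfun t (y :: ys) z := by
        intro b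
        rw [List.toFinset_cons, Finset.sum_insert hxT]
        have h1 : Kf t b x * wfun t (x :: y :: ys) x = Kf t b x * (1/(1+e)) := by
          rw [wfun_cons_eq, if_pos rfl, if_neg (fun h => hxmem (by simp [h])), hwx]
          ring
        have h2 : ∑ z ∈ (y :: ys).toFinset, Kf t b z * wfun t (x :: y :: ys) z
            = Kf t b y * (1/(1+e) - 1)
              + ∑ z ∈ (y :: ys).toFinset, Kf t b z * wfun t (y :: ys) z := by
          have : ∀ z ∈ (y :: ys).toFinset, Kf t b z * wfun t (x :: y :: ys) z
              = (if z = y then Kf t b z * (1/(1+e) - 1) else 0) + Kf t b z * wfun t (y :: ys) z := by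
            intro z hz
            have hzx : z ≠ x := fun h => hxT (h ▸ hz)
            rw [wfun_cons_eq, if_neg hzx]
            split <;> ring
          rw [Finset.sum_congr rfl this, Finset.sum_add_distrib, Finset.sum_ite_eq',
            if_pos (by simp : y ∈ (y :: ys).toFinset)]
        rw [h1, h2]; ring
      rcases List.mem_cons.mp ha with hax | ha'
      · subst hax
        rw [hsum a]
        have hKaa : Kf t a a = 1 := Kf_self t a
        have hmid : ∑ z ∈ (y :: ys).toFinset, Kf t a z * wfun t (y :: ys) z
            = e * ∑ z ∈ (y :: ys).toFinset, Kf t y z * wfun t (y :: ys) z := by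
          rw [Finset.mul_sum]
          apply Finset.sum_congr rfl
          intro z hz
          have hz' : z ∈ y :: ys := List.mem_toFinset.mp hz
          rw [Kf_mul hxy (hyle z hz'), ← he]; ring
        rw [hmid, ih hs' hn' y (by simp), hKaa, ← he]
        field_simp
        ring
      · rw [hsum a]
        have hya : y ≤ a := hyle a ha'
        have hKax : Kf t a x = e * Kf t a y := by
          rw [Kf_comm t a x, Kf_mul hxy hya, he, Kf_comm t y a]
        rw [hKax, ih hs' hn' a ha']
        field_simp
        ring

noncomputable def Mlist (t : ℝ) (xs : List ℝ) : ℝ := ∑ z ∈ xs.toFinset, wfun t xs z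

lemma Mlist_singleton (t x : ℝ) : Mlist t [x] = 1 := by simp [Mlist, wfun]

lemma Mlist_cons {t : ℝ} {x y : ℝ} {ys : List ℝ} (hn : (x :: y :: ys).Nodup) :
    Mlist t (x :: y :: ys) = (2/(1 + Kf t x y) - 1) + Mlist t (y :: ys) := by
  have hxmem : x ∉ y :: ys := (List.nodup_cons.mp hn).1
  have hxT : x ∉ (y :: ys).toFinset := by rw [List.mem_toFinset]; exact hxmem
  have hwx : wfun t (y :: ys) x = 0 := wfun_notmem hxmem
  set e := Kf t x y with he
  rw [Mlist, List.toFinset_cons, Finset.sum_insert hxT]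
  have h1 : wfun t (x :: y :: ys) x = 1/(1+e) := by
    rw [wfun_cons_eq, if_pos rfl, if_neg (fun h => hxmem (by simp [h])), hwx]; ring
  have h2 : ∑ z ∈ (y :: ys).toFinset, wfun t (x :: y :: ys) z
      = (1/(1+e) - 1) + Mlist t (y :: ys) := by
    have : ∀ z ∈ (y :: ys).toFinset, wfun t (x :: y :: ys) z
        = (if z = y then (1/(1+e) - 1) else 0) + wfun t (y :: ys) z := by
      intro z hz
      have hzx : z ≠ x := fun h => hxT (h ▸ hz)
      rw [wfun_cons_eq, if_neg hzx]
      split <;> ring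
    rw [Finset.sum_congr rfl this, Finset.sum_add_distrib, Finset.sum_ite_eq',
      if_pos (by simp : y ∈ (y :: ys).toFinset)]
    rfl
  rw [h1, h2]; ring

lemma Mlist_ge_one {t : ℝ} (ht : 0 ≤ t) : ∀ (xs : List ℝ), xs ≠ [] → xs.Nodup →
    1 ≤ Mlist t xs := by
  intro xs
  induction xs with
  | nil => intro h; exact absurd rfl h
  | cons x xs ih =>
    intro _ hn
    match xs with
    | [] => rw [Mlist_singleton]
    | y :: ys =>
      rw [Mlist_cons hn]
      have := half_le_inv_one_add_Kf ht x y
      have := ih (by simp) hn.of_cons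
      have : 1/2 ≤ 1/(1 + Kf t x y) := half_le_inv_one_add_Kf ht x y
      have h2 : 2/(1 + Kf t x y) = 2*(1/(1 + Kf t x y)) := by ring
      linarith [ih (by simp) hn.of_cons, half_le_inv_one_add_Kf ht x y]

lemma quad_update {t : ℝ} (T : Finset ℝ) {y : ℝ} (hy : y ∈ T) (v : ℝ → ℝ) (c : ℝ) :
    ∑ a ∈ T, ∑ b ∈ T, (Function.update v y (v y + c)) a * (Function.update v y (v y + c)) b * Kf t a b
      = (∑ a ∈ T, ∑ b ∈ T, v a * v b * Kf t a b)
        + 2 * c * (∑ b ∈ T, v b * Kf t y b) + c^2 * Kf t y y := by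
  have hupd : ∀ z, (Function.update v y (v y + c)) z = v z + (if z = y then c else 0) := by
    intro z
    by_cases h : z = y
    · subst h; simp
    · simp [Function.update_of_ne h, h]
  have expand : ∀ a b : ℝ, (Function.update v y (v y + c)) a * (Function.update v y (v y + c)) b * Kf t a b
      = v a * v b * Kf t a b + v a * (if b = y then c else 0) * Kf t a b
        + (if a = y then c else 0) * v b * Kf t a b
        + (if a = y then c else 0) * (if b = y then c else 0) * Kf t a b := by
    intro a b; rw [hupd a, hupd b]; ring
  calc ∑ a ∈ T, ∑ b ∈ T, (Function.update v y (v y + c)) a * (Function.update v y (v y + c)) b * Kf t a b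
      = ∑ a ∈ T, ∑ b ∈ T, (v a * v b * Kf t a b + v a * (if b = y then c else 0) * Kf t a b
        + (if a = y then c else 0) * v b * Kf t a b
        + (if a = y then c else 0) * (if b = y then c else 0) * Kf t a b) := by
        apply Finset.sum_congr rfl; intro a _; apply Finset.sum_congr rfl; intro b _
        exact expand a b
    _ = (∑ a ∈ T, ∑ b ∈ T, v a * v b * Kf t a b)
        + (∑ a ∈ T, ∑ b ∈ T, v a * (if b = y then c else 0) * Kf t a b)
        + (∑ a ∈ T, ∑ b ∈ T, (if a = y then c else 0) * v b * Kf t a b)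
        + (∑ a ∈ T, ∑ b ∈ T, (if a = y then c else 0) * (if b = y then c else 0) * Kf t a b) := by
        simp [Finset.sum_add_distrib]
    _ = (∑ a ∈ T, ∑ b ∈ T, v a * v b * Kf t a b)
        + 2 * c * (∑ b ∈ T, v b * Kf t y b) + c^2 * Kf t y y := by
        have h2 : ∑ a ∈ T, ∑ b ∈ T, v a * (if b = y then c else 0) * Kf t a b
            = c * ∑ a ∈ T, v a * Kf t y a := by
          rw [Finset.mul_sum]
          apply Finset.sum_congr rfl; intro a _
          have : ∀ b, v a * (if b = y then c else 0) * Kf t a b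
              = if b = y then v a * c * Kf t a b else 0 := by
            intro b; split <;> ring
          rw [Finset.sum_congr rfl (fun b _ => this b), Finset.sum_ite_eq', if_pos hy,
            Kf_comm t a y]
          ring
        have h3 : ∑ a ∈ T, ∑ b ∈ T, (if a = y then c else 0) * v b * Kf t a b
            = c * ∑ b ∈ T, v b * Kf t y b := by
          have key : ∀ a, ∑ b ∈ T, (if a = y then c else 0) * v b * Kf t a b
              = if a = y then c * ∑ b ∈ T, v b * Kf t y b else 0 := by
            intro a
            by_cases h : a = y
            · subst h
              simp only [eq_self_iff_true, if_true, Finset.mul_sum]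
              apply Finset.sum_congr rfl; intro b _; ring
            · simp only [if_neg h]
              apply Finset.sum_eq_zero; intro b _; ring
          rw [Finset.sum_congr rfl (fun a _ => key a), Finset.sum_ite_eq', if_pos hy]
        have h4 : ∑ a ∈ T, ∑ b ∈ T, (if a = y then c else 0) * (if b = y then c else 0) * Kf t a b
            = c^2 * Kf t y y := by
          have key : ∀ a, ∑ b ∈ T, (if a = y then c else 0) * (if b = y then c else 0) * Kf t a b
              = if a = y then c^2 * Kf t y a else 0 := by
            intro a
            by_cases h : a = y
            · subst h
              simp only [eq_self_iff_true, if_true]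
              have inner : ∀ b, c * (if b = a then c else 0) * Kf t a b
                  = if b = a then c^2 * Kf t a b else 0 := by
                intro b; split <;> ring
              rw [Finset.sum_congr rfl (fun b _ => inner b), Finset.sum_ite_eq', if_pos hy]
            · simp only [if_neg h]
              apply Finset.sum_eq_zero; intro b _; ring
          rw [Finset.sum_congr rfl (fun a _ => key a), Finset.sum_ite_eq', if_pos hy]
        rw [h2, h3, h4]
        have : ∑ a ∈ T, v a * Kf t y a = ∑ b ∈ T, v b * Kf t y b := rfl
        rw [this]; ring

lemma kernel_psd {t : ℝ} (ht : 0 ≤ t) : ∀ (xs : List ℝ), xs.Pairwise (· ≤ ·) → xs.Nodup →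
    ∀ v : ℝ → ℝ, 0 ≤ ∑ a ∈ xs.toFinset, ∑ b ∈ xs.toFinset, v a * v b * Kf t a b := by
  intro xs
  induction xs with
  | nil => intro _ _ v; simp
  | cons x xs ih =>
    intro hs hn v
    match xs with
    | [] =>
      simp only [List.toFinset_cons, List.toFinset_nil, LawfulSingleton.insert_empty_eq,
        Finset.sum_singleton, Kf_self]
      nlinarith [sq_nonneg (v x)]
    | y :: ys =>
      have hxmem : x ∉ y :: ys := (List.nodup_cons.mp hn).1
      have hn' : (y :: ys).Nodup := hn.of_cons
      have hs' : (y :: ys).Pairwise (· ≤ ·) := (List.pairwise_cons.mp hs).2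
      have hxle : ∀ z ∈ y :: ys, x ≤ z := (List.pairwise_cons.mp hs).1
      have hyle : ∀ z ∈ y :: ys, y ≤ z := by
        intro z hz
        rcases List.mem_cons.mp hz with h | h
        · exact le_of_eq h.symm
        · exact (List.pairwise_cons.mp hs').1 z h
      have hxy : x ≤ y := hxle y (by simp)
      set e := Kf t x y with he
      have hep := Kf_pos t x y
      have he1 : e ≤ 1 := Kf_le_one ht x y
      have hxT : x ∉ (y :: ys).toFinset := by rw [List.mem_toFinset]; exact hxmem
      have hyT : y ∈ (y :: ys).toFinset := by simp
      set T := (y :: ys).toFinset with hT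
      set Sy := ∑ b ∈ T, v b * Kf t y b with hSy
      have hsplit : ∑ a ∈ (x :: y :: ys).toFinset, ∑ b ∈ (x :: y :: ys).toFinset, v a * v b * Kf t a b
          = (v x)^2 + 2 * v x * (e * Sy) + ∑ a ∈ T, ∑ b ∈ T, v a * v b * Kf t a b := by
        rw [List.toFinset_cons, ← hT]
        rw [Finset.sum_insert hxT]
        have hinner : ∀ a : ℝ, ∑ b ∈ insert x T, v a * v b * Kf t a b
            = v a * v x * Kf t a x + ∑ b ∈ T, v a * v b * Kf t a b :=
          fun a => Finset.sum_insert hxT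
        rw [hinner x]
        rw [Finset.sum_congr rfl (fun a (_ : a ∈ T) => hinner a)]
        rw [Finset.sum_add_distrib]
        have hKxb : ∀ b ∈ T, Kf t x b = e * Kf t y b := by
          intro b hb
          rw [he, ← Kf_mul hxy (hyle b (List.mem_toFinset.mp hb))]
        have hc1 : ∑ b ∈ T, v x * v b * Kf t x b = v x * (e * Sy) := by
          rw [hSy, Finset.mul_sum, Finset.mul_sum]
          apply Finset.sum_congr rfl; intro b hb
          rw [hKxb b hb]; ring
        have hc2 : ∑ a ∈ T, v a * v x * Kf t a x = v x * (e * Sy) := by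
          rw [hSy, Finset.mul_sum, Finset.mul_sum]
          apply Finset.sum_congr rfl; intro a ha
          rw [Kf_comm t a x, hKxb a ha]; ring
        rw [hc1, hc2, Kf_self]
        ring
      rw [hsplit]
      have hIH := ih hs' hn' (Function.update v y (v y + e * v x))
      rw [quad_update T hyT v (e * v x)] at hIH
      rw [Kf_self] at hIH
      have hsq : 0 ≤ (1 - e^2) * (v x)^2 :=
        mul_nonneg (by nlinarith [hep, he1]) (sq_nonneg (v x))
      rw [← hSy] at hIH
      nlinarith [hIH, hsq]

/-- The exponentiated metric complexity `D^t(A)` of a finite subset `A` of a metric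
space: the supremum over finitely supported probability measures `p` supported in `A`
of `(∑_{x,y} p(x)·p(y)·e^{−t·d(x,y)})⁻¹`, with `D^t(∅) = 1` by convention. -/
noncomputable def Dfin {X : Type*} [MetricSpace X] (t : ℝ) (A : Finset X) : ℝ :=
  if A.Nonempty then
    sSup { r : ℝ | ∃ p : X → ℝ, (∀ x, 0 ≤ p x) ∧ (∀ x, p x ≠ 0 → x ∈ A) ∧
      (∑ x ∈ A, p x) = 1 ∧
      r = (∑ x ∈ A, ∑ y ∈ A, p x * p y * Real.exp (-(t * dist x y)))⁻¹ }
  else 1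

def Pset (t : ℝ) (A : Finset ℝ) : Set ℝ :=
  { r : ℝ | ∃ p : ℝ → ℝ, (∀ x, 0 ≤ p x) ∧ (∀ x, p x ≠ 0 → x ∈ A) ∧
      (∑ x ∈ A, p x) = 1 ∧
      r = (∑ x ∈ A, ∑ y ∈ A, p x * p y * Real.exp (-(t * dist x y)))⁻¹ }

lemma Dfin_eq (t : ℝ) (A : Finset ℝ) :
    Dfin t A = if A.Nonempty then sSup (Pset t A) else 1 := rfl

lemma Kf_eq_exp (t x y : ℝ) : Real.exp (-(t * dist x y)) = Kf t x y := rfl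

-- upper bound on members of Pset
lemma Pset_le {t C : ℝ} (ht : 0 ≤ t) (hC : 0 ≤ C) (A : Finset ℝ) (hA : ∀ x ∈ A, |x| ≤ C) :
    ∀ r ∈ Pset t A, r ≤ Real.exp (t * (2*C)) := by
  rintro r ⟨p, hp0, hsupp, hsum, hr⟩
  set Z := ∑ x ∈ A, ∑ y ∈ A, p x * p y * Real.exp (-(t * dist x y)) with hZ
  have hZge : Real.exp (-(t * (2*C))) ≤ Z := by
    set c := Real.exp (-(t * (2*C))) with hc
    have hinner : ∀ x ∈ A, ∑ y ∈ A, p x * p y * c = p x * c := by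
      intro x _
      have : ∑ y ∈ A, p x * p y * c = (p x * c) * ∑ y ∈ A, p y := by
        rw [Finset.mul_sum]
        apply Finset.sum_congr rfl; intro y _; ring
      rw [this, hsum, mul_one]
    have h1 : ∑ x ∈ A, ∑ y ∈ A, p x * p y * c = c := by
      rw [Finset.sum_congr rfl hinner, ← Finset.sum_mul, hsum, one_mul]
    rw [← h1, hZ]
    apply Finset.sum_le_sum; intro x hx
    apply Finset.sum_le_sum; intro y hy
    apply mul_le_mul_of_nonneg_left _ (mul_nonneg (hp0 x) (hp0 y))
    apply Real.exp_le_exp.2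
    have hd : dist x y ≤ 2*C := by
      rw [Real.dist_eq]
      have := hA x hx; have := hA y hy
      calc |x - y| ≤ |x| + |y| := abs_sub _ _
        _ ≤ 2*C := by linarith
    nlinarith [mul_le_mul_of_nonneg_left hd ht]
  have hZpos : 0 < Z := lt_of_lt_of_le (Real.exp_pos _) hZge
  rw [hr]
  calc Z⁻¹ ≤ (Real.exp (-(t * (2*C))))⁻¹ := by
        apply inv_anti₀ (Real.exp_pos _) hZge
    _ = Real.exp (t * (2*C)) := by rw [← Real.exp_neg, neg_neg]

lemma Pset_bddAbove {t C : ℝ} (ht : 0 ≤ t) (hC : 0 ≤ C) (A : Finset ℝ)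
    (hA : ∀ x ∈ A, |x| ≤ C) : BddAbove (Pset t A) :=
  ⟨Real.exp (t * (2*C)), fun r hr => Pset_le ht hC A hA r hr⟩

-- Z value of the weighting measure
lemma Z_of_weights {t : ℝ} (ht : 0 ≤ t) (xs : List ℝ) (hs : xs.Pairwise (· ≤ ·))
    (hn : xs.Nodup) (hne : xs ≠ []) :
    ∑ x ∈ xs.toFinset, ∑ y ∈ xs.toFinset, wfun t xs x * wfun t xs y * Kf t x y
      = Mlist t xs := by
  have : ∀ x ∈ xs.toFinset, ∑ y ∈ xs.toFinset, wfun t xs x * wfun t xs y * Kf t x y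
      = wfun t xs x := by
    intro x hx
    have : ∑ y ∈ xs.toFinset, wfun t xs x * wfun t xs y * Kf t x y
        = wfun t xs x * ∑ y ∈ xs.toFinset, Kf t x y * wfun t xs y := by
      rw [Finset.mul_sum]; apply Finset.sum_congr rfl; intro y _; ring
    rw [this, wfun_identity ht xs hs hn x (List.mem_toFinset.mp hx), mul_one]
  rw [Finset.sum_congr rfl this]
  rfl

lemma Mlist_le_Dfin {t C : ℝ} (ht : 0 ≤ t) (hC : 0 ≤ C) (xs : List ℝ)
    (hs : xs.Pairwise (· ≤ ·)) (hn : xs.Nodup) (hne : xs ≠ [])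
    (hb : ∀ x ∈ xs, |x| ≤ C) :
    Mlist t xs ≤ Dfin t xs.toFinset := by
  have hAne : xs.toFinset.Nonempty := by
    match xs, hne with
    | x :: xs, _ => exact ⟨x, by simp⟩
  have hM1 : 1 ≤ Mlist t xs := Mlist_ge_one ht xs hne hn
  have hMpos : 0 < Mlist t xs := by linarith
  rw [Dfin_eq, if_pos hAne]
  apply le_csSup (Pset_bddAbove ht hC _ (fun x hx => hb x (List.mem_toFinset.mp hx)))
  refine ⟨fun z => wfun t xs z / Mlist t xs, ?_, ?_, ?_, ?_⟩
  · intro x; exact div_nonneg (wfun_nonneg ht xs hn x) hMpos.le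
  · intro x hx
    have hx' : wfun t xs x / Mlist t xs ≠ 0 := hx
    have : wfun t xs x ≠ 0 := by
      intro h; apply hx'; rw [h, zero_div]
    exact List.mem_toFinset.mpr (wfun_support t xs x this)
  · show ∑ x ∈ xs.toFinset, wfun t xs x / Mlist t xs = 1
    rw [← Finset.sum_div]
    exact div_self hMpos.ne'
  · have hZ : ∑ x ∈ xs.toFinset, ∑ y ∈ xs.toFinset,
        (wfun t xs x / Mlist t xs) * (wfun t xs y / Mlist t xs) * Real.exp (-(t * dist x y))
        = (Mlist t xs)⁻¹ := by
      have h1 : ∀ x y : ℝ, (wfun t xs x / Mlist t xs) * (wfun t xs y / Mlist t xs) * Real.exp (-(t * dist x y))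
          = (wfun t xs x * wfun t xs y * Kf t x y) / (Mlist t xs)^2 := by
        intro x y
        rw [Kf_eq_exp, div_mul_div_comm, div_mul_eq_mul_div, pow_two]
      rw [Finset.sum_congr rfl (fun x _ => Finset.sum_congr rfl (fun y _ => h1 x y))]
      rw [Finset.sum_congr rfl (fun x (_ : x ∈ xs.toFinset) => (Finset.sum_div _ _ _).symm),
        ← Finset.sum_div]
      rw [Z_of_weights ht xs hs hn hne, pow_two, ← div_div, div_self hMpos.ne', one_div]
    rw [hZ, inv_inv]

lemma Dfin_le_Mlist {t : ℝ} (ht : 0 ≤ t) (xs : List ℝ)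
    (hs : xs.Pairwise (· ≤ ·)) (hn : xs.Nodup) (hne : xs ≠ []) :
    Dfin t xs.toFinset ≤ Mlist t xs := by
  have hAne : xs.toFinset.Nonempty := by
    match xs, hne with
    | x :: xs, _ => exact ⟨x, by simp⟩
  have hM1 : 1 ≤ Mlist t xs := Mlist_ge_one ht xs hne hn
  have hMpos : 0 < Mlist t xs := by linarith
  set A := xs.toFinset with hA
  set M := Mlist t xs with hM
  set w := wfun t xs with hw
  rw [Dfin_eq, if_pos hAne]
  apply Real.sSup_le _ (by linarith)
  rintro r ⟨p, hp0, hsupp, hsum, hr⟩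
  set Z := ∑ x ∈ A, ∑ y ∈ A, p x * p y * Real.exp (-(t * dist x y)) with hZ
  -- rewrite Z with Kf
  have hZK : Z = ∑ x ∈ A, ∑ y ∈ A, p x * p y * Kf t x y := rfl
  -- the identity sums
  have hid : ∀ a ∈ A, ∑ b ∈ A, Kf t a b * w b = 1 := by
    intro a ha
    exact wfun_identity ht xs hs hn a (List.mem_toFinset.mp ha)
  have hwsum : ∑ a ∈ A, w a = M := rfl
  -- expansion of the PSD quadratic form at v := p - w/M
  set v : ℝ → ℝ := fun z => p z - w z / M with hv
  have hpsd := kernel_psd ht xs hs hn v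
  have hexp : ∑ a ∈ A, ∑ b ∈ A, v a * v b * Kf t a b
      = Z - 2/M + M/M^2 := by
    have hterm : ∀ a b : ℝ, v a * v b * Kf t a b
        = p a * p b * Kf t a b - (1/M) * (p a * w b * Kf t a b)
          - (1/M) * (w a * p b * Kf t a b) + (1/M^2) * (w a * w b * Kf t a b) := by
      intro a b; rw [hv]; field_simp; ring
    rw [Finset.sum_congr rfl (fun a (_ : a ∈ A) => Finset.sum_congr rfl
      (fun b (_ : b ∈ A) => hterm a b))]
    have split : ∑ a ∈ A, ∑ b ∈ A, (p a * p b * Kf t a b - (1/M) * (p a * w b * Kf t a b)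
          - (1/M) * (w a * p b * Kf t a b) + (1/M^2) * (w a * w b * Kf t a b))
        = (∑ a ∈ A, ∑ b ∈ A, p a * p b * Kf t a b)
          - (1/M) * (∑ a ∈ A, ∑ b ∈ A, p a * w b * Kf t a b)
          - (1/M) * (∑ a ∈ A, ∑ b ∈ A, w a * p b * Kf t a b)
          + (1/M^2) * (∑ a ∈ A, ∑ b ∈ A, w a * w b * Kf t a b) := by
      simp only [Finset.sum_add_distrib, Finset.sum_sub_distrib, ← Finset.mul_sum]
    rw [split]
    have hS1 : ∑ a ∈ A, ∑ b ∈ A, p a * w b * Kf t a b = 1 := by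
      have : ∀ a ∈ A, ∑ b ∈ A, p a * w b * Kf t a b = p a := by
        intro a ha
        have : ∑ b ∈ A, p a * w b * Kf t a b = p a * ∑ b ∈ A, Kf t a b * w b := by
          rw [Finset.mul_sum]; apply Finset.sum_congr rfl; intro b _; ring
        rw [this, hid a ha, mul_one]
      rw [Finset.sum_congr rfl this, hsum]
    have hS2 : ∑ a ∈ A, ∑ b ∈ A, w a * p b * Kf t a b = 1 := by
      rw [Finset.sum_comm]
      have : ∀ b ∈ A, ∑ a ∈ A, w a * p b * Kf t a b = p b := by
        intro b hb
        have : ∑ a ∈ A, w a * p b * Kf t a b = p b * ∑ a ∈ A, Kf t b a * w a := by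
          rw [Finset.mul_sum]; apply Finset.sum_congr rfl; intro a _
          rw [Kf_comm t b a]; ring
        rw [this, hid b hb, mul_one]
      rw [Finset.sum_congr rfl this, hsum]
    have hS3 : ∑ a ∈ A, ∑ b ∈ A, w a * w b * Kf t a b = M := by
      have : ∀ a ∈ A, ∑ b ∈ A, w a * w b * Kf t a b = w a := by
        intro a ha
        have : ∑ b ∈ A, w a * w b * Kf t a b = w a * ∑ b ∈ A, Kf t a b * w b := by
          rw [Finset.mul_sum]; apply Finset.sum_congr rfl; intro b _; ring
        rw [this, hid a ha, mul_one]
      rw [Finset.sum_congr rfl this, hwsum]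
    rw [hS1, hS2, hS3, ← hZK]
    ring
  rw [hexp] at hpsd
  have hZge : 1/M ≤ Z := by
    have : M/M^2 = 1/M := by rw [pow_two, ← div_div, div_self hMpos.ne']
    rw [this] at hpsd
    have h2M : 2/M = 2*(1/M) := by ring
    linarith
  have hZpos : 0 < Z := lt_of_lt_of_le (by positivity) hZge
  rw [hr]
  calc Z⁻¹ ≤ (1/M)⁻¹ := inv_anti₀ (by positivity) hZge
    _ = M := by rw [one_div, inv_inv]

lemma Mlist_smul {t l : ℝ} (ht : 0 ≤ t) (hl0 : 0 < l) (hl1 : l ≤ 1) :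
    ∀ xs : List ℝ, xs.Pairwise (· ≤ ·) → xs.Nodup → xs ≠ [] →
    l * Mlist t xs + (1 - l) ≤ Mlist t (xs.map (fun z => l * z)) := by
  have hinj : Function.Injective (fun z : ℝ => l * z) := fun a b h => by
    exact mul_left_cancel₀ hl0.ne' h
  intro xs
  induction xs with
  | nil => intro _ _ h; exact absurd rfl h
  | cons x xs ih =>
    intro hs hn _
    match xs with
    | [] =>
      simp only [List.map_cons, List.map_nil, Mlist_singleton]
      linarith
    | y :: ys =>
      have hs' : (y :: ys).Pairwise (· ≤ ·) := (List.pairwise_cons.mp hs).2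
      have hn' : (y :: ys).Nodup := hn.of_cons
      have hxy : x ≤ y := (List.pairwise_cons.mp hs).1 y (by simp)
      have hIH := ih hs' hn' (by simp)
      have hnmap : ((x :: y :: ys).map (fun z : ℝ => l * z)).Nodup := hn.map hinj
      have hmape : (x :: y :: ys).map (fun z : ℝ => l * z)
          = (l*x) :: (l*y) :: (ys.map (fun z : ℝ => l * z)) := rfl
      have hmape' : (y :: ys).map (fun z : ℝ => l * z)
          = (l*y) :: (ys.map (fun z : ℝ => l * z)) := rfl
      have hnm : ((l*x) :: (l*y) :: (ys.map (fun z : ℝ => l * z))).Nodup := by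
        rw [← hmape]; exact hnmap
      rw [hmape, Mlist_cons hnm, Mlist_cons hn]
      rw [hmape'] at hIH
      set s := t * (y - x) with hsdef
      have hs0 : 0 ≤ s := mul_nonneg ht (by linarith)
      have eK : Kf t x y = Real.exp (-s) := by
        rw [Kf, Real.dist_eq, abs_of_nonpos (by linarith : x - y ≤ 0), hsdef]
        ring_nf
      have eKl : Kf t (l*x) (l*y) = Real.exp (-(l*s)) := by
        rw [Kf, Real.dist_eq, abs_of_nonpos (by nlinarith : l*x - l*y ≤ 0), hsdef]
        ring_nf
      have conv : ∀ e : ℝ, 0 < 1 + e → 2/(1+e) - 1 = (1-e)/(1+e) := by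
        intro e h; field_simp; ring
      have h1 := one_add_Kf_pos t x y
      have h2 := one_add_Kf_pos t (l*x) (l*y)
      have hts := tanh_scale l s hl0.le hl1 hs0
      rw [← eK, ← eKl] at hts
      rw [conv _ h1, conv _ h2] at *
      linarith [hts, hIH]

lemma Dfin_le_exp {t C : ℝ} (ht : 0 ≤ t) (hC : 0 ≤ C) (A : Finset ℝ)
    (hA : ∀ x ∈ A, |x| ≤ C) : Dfin t A ≤ Real.exp (t * (2*C)) := by
  rw [Dfin_eq]
  split
  · exact Real.sSup_le (Pset_le ht hC A hA) (Real.exp_pos _).le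
  · exact Real.one_le_exp (by positivity)

/-- The exponentiated metric complexity of a compact (or arbitrary) subset `K`:
the supremum of `D^t(F)` over finite subsets `F ⊆ K`. -/
noncomputable def Dcpt {X : Type*} [MetricSpace X] (t : ℝ) (K : Set X) : ℝ :=
  sSup { r : ℝ | ∃ F : Finset X, ↑F ⊆ K ∧ r = Dfin t F }

/-- For a nonempty compact E ⊆ ℝ and λ ∈ [0,1], D^t(λ·E) ≥ λ·D^t(E) + (1 − λ). -/
theorem Dcpt_smul_ge (t : ℝ) (ht : 0 < t)
    (E : Set ℝ) (hE : E.Nonempty) (hEc : IsCompact E)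
    (l : ℝ) (hl0 : 0 ≤ l) (hl1 : l ≤ 1) :
    l * Dcpt t E + (1 - l) ≤ Dcpt t (l • E) := by
  have ht' : 0 ≤ t := ht.le
  obtain ⟨C₀, hC₀⟩ := hEc.isBounded.exists_norm_le
  set C := max C₀ 0 with hCdef
  have hC0 : 0 ≤ C := le_max_right _ _
  have hCE : ∀ x ∈ E, |x| ≤ C := by
    intro x hx
    calc |x| = ‖x‖ := rfl
      _ ≤ C₀ := hC₀ x hx
      _ ≤ C := le_max_left _ _
  have hCl : ∀ x ∈ l • E, |x| ≤ C := by
    rintro _ ⟨y, hy, rfl⟩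
    simp only [smul_eq_mul]
    rw [abs_mul, abs_of_nonneg hl0]
    have h1 := hCE y hy
    have h2 : (0:ℝ) ≤ |y| := abs_nonneg y
    nlinarith
  set S' := { r : ℝ | ∃ F : Finset ℝ, ↑F ⊆ l • E ∧ r = Dfin t F } with hS'
  have hbdd : BddAbove S' := by
    refine ⟨Real.exp (t * (2*C)), ?_⟩
    rintro r ⟨F, hF, rfl⟩
    exact Dfin_le_exp ht' hC0 F (fun x hx => hCl x (hF hx))
  have hD' : Dcpt t (l • E) = sSup S' := rfl
  -- 1 ≤ Dcpt t (l • E)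
  have hone : (1:ℝ) ≤ Dcpt t (l • E) := by
    obtain ⟨x₀, hx₀⟩ := hE
    have hmem : (l * x₀) ∈ l • E := by
      have := Set.smul_mem_smul_set (a := l) hx₀
      rwa [smul_eq_mul] at this
    have hsub : ↑({l * x₀} : Finset ℝ) ⊆ l • E := by
      intro z hz
      simp only [Finset.coe_singleton, Set.mem_singleton_iff] at hz
      rw [hz]; exact hmem
    have hlist : ([l * x₀] : List ℝ).toFinset = ({l * x₀} : Finset ℝ) := by simp
    have hMle : Mlist t [l * x₀] ≤ Dfin t ({l * x₀} : Finset ℝ) := by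
      rw [← hlist]
      apply Mlist_le_Dfin ht' hC0 _ (by simp) (by simp) (by simp)
      intro x hx
      simp only [List.mem_singleton] at hx
      rw [hx]; exact hCl _ hmem
    rw [Mlist_singleton] at hMle
    rw [hD']
    exact le_trans hMle (le_csSup hbdd ⟨{l * x₀}, hsub, rfl⟩)
  rcases eq_or_lt_of_le hl0 with hl | hlpos
  · subst hl; simpa using hone
  -- key bound for each member
  have key : ∀ r ∈ { r : ℝ | ∃ F : Finset ℝ, ↑F ⊆ E ∧ r = Dfin t F },
      l * r + (1 - l) ≤ Dcpt t (l • E) := by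
    rintro r ⟨F, hFE, rfl⟩
    by_cases hF : F.Nonempty
    · set xs := F.sort (· ≤ ·) with hxs
      have hsorted : xs.Pairwise (· ≤ ·) := Finset.pairwise_sort _ _
      have hnodup : xs.Nodup := Finset.sort_nodup _ _
      have htf : xs.toFinset = F := Finset.sort_toFinset _ _
      have hne : xs ≠ [] := by
        intro h
        rw [h] at htf
        simp at htf
        rw [← htf] at hF
        exact Finset.not_nonempty_empty hF
      set ys := xs.map (fun z : ℝ => l * z) with hys
      have hinj : Function.Injective (fun z : ℝ => l * z) := fun a b h =>
        mul_left_cancel₀ hlpos.ne' h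
      have hys_sorted : ys.Pairwise (· ≤ ·) := by
        apply List.Pairwise.map
        · intro a b hab
          exact mul_le_mul_of_nonneg_left hab hl0
        · exact hsorted
      have hys_nodup : ys.Nodup := hnodup.map hinj
      have hys_ne : ys ≠ [] := by
        rw [hys]
        simp [hne]
      have hys_mem : ∀ z ∈ ys, z ∈ l • E := by
        intro z hz
        rw [hys, List.mem_map] at hz
        obtain ⟨x, hx, rfl⟩ := hz
        have hxF : x ∈ F := (Finset.mem_sort _).mp hx
        have := Set.smul_mem_smul_set (a := l) (hFE hxF)
        rwa [smul_eq_mul] at this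
      have hsub : ↑(ys.toFinset) ⊆ l • E := by
        intro z hz
        rw [Finset.mem_coe, List.mem_toFinset] at hz
        exact hys_mem z hz
      have hbys : ∀ x ∈ ys, |x| ≤ C := fun x hx => hCl x (hys_mem x hx)
      have step1 : Dfin t F ≤ Mlist t xs := by
        rw [← htf]
        exact Dfin_le_Mlist ht' xs hsorted hnodup hne
      have step2 : l * Mlist t xs + (1 - l) ≤ Mlist t ys :=
        Mlist_smul ht' hlpos hl1 xs hsorted hnodup hne
      have step3 : Mlist t ys ≤ Dfin t ys.toFinset :=
        Mlist_le_Dfin ht' hC0 ys hys_sorted hys_nodup hys_ne hbys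
      have step4 : Dfin t ys.toFinset ≤ Dcpt t (l • E) := by
        rw [hD']
        exact le_csSup hbdd ⟨ys.toFinset, hsub, rfl⟩
      have hmul : l * Dfin t F ≤ l * Mlist t xs :=
        mul_le_mul_of_nonneg_left step1 hl0
      linarith
    · have : Dfin t F = 1 := by
        rw [Dfin_eq, if_neg hF]
      rw [this]
      calc l * 1 + (1 - l) = 1 := by ring
        _ ≤ _ := hone
  -- conclude
  have hDE : Dcpt t E = sSup { r : ℝ | ∃ F : Finset ℝ, ↑F ⊆ E ∧ r = Dfin t F } := rfl
  have hub : Dcpt t E ≤ (Dcpt t (l • E) - (1 - l)) / l := by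
    rw [hDE]
    apply Real.sSup_le
    · intro r hr
      rw [le_div_iff₀ hlpos]
      have := key r hr
      linarith
    · apply div_nonneg _ hl0
      linarith
  calc l * Dcpt t E + (1 - l) ≤ l * ((Dcpt t (l • E) - (1 - l)) / l) + (1 - l) := by
        have := mul_le_mul_of_nonneg_left hub hl0
        linarith
    _ = Dcpt t (l • E) := by
        field_simp
        ring
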